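/- Let p > 0, α > 0 and κ ≥ 1 be real numbers. The function k(X) = log(Tr(X^{−p})) is μ-strongly convex with respect to the Frobenius norm on the convex set 𝒟 = {X ∈ ℝ^{n×n} : X symmetric positive definite, λ_max(X) ≤ α, λ_max(X) ≤ κ·λ_min(X)}, with μ = p/(n·κ^p·α²). -/

import Mathlib

/-!
Let `Z = a • X + b • Y` with eigenpairs `(λᵢ, uᵢ)`. Written in the basis `(uᵢ)`, the diagonals
of `X` and `Y` are doubly stochastic images of their spectra `x`, `y`, so
`λᵢ = a ∑ⱼ Cᵢⱼ xⱼ + b ∑ⱼ Dᵢⱼ yⱼ`. With the Gibbs weights `rᵢ = λᵢ^{-p} / Tr Z^{-p}` one has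
`log Tr Z^{-p} = ∑ᵢ rᵢ (-p log λᵢ - log rᵢ)`, while the same weights only bound the
corresponding expression for `X` from below: `∑ᵢ rᵢ (∑ⱼ Cᵢⱼ (-p log xⱼ) - log rᵢ) ≤ log Tr X^{-p}`
(Gibbs' variational principle). The condition-number bound forces `rᵢ ≥ 1 / (n κ^p)`, which
makes every `φᵢ(t) = -p rᵢ log t - μ t² / 2` convex on `(0, α]`; Jensen's inequality
`φᵢ(λᵢ) ≤ a ∑ⱼ Cᵢⱼ φᵢ(xⱼ) + b ∑ⱼ Dᵢⱼ φᵢ(yⱼ)`, summed over `i`, gives the strong convexity.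
-/

open Matrix

/-- Largest eigenvalue of a (Hermitian) real matrix. -/
noncomputable def eigMax {n : ℕ} (M : Matrix (Fin n) (Fin n) ℝ) : ℝ :=
  if h : M.IsHermitian then ⨆ i, h.eigenvalues i else 0

/-- Smallest eigenvalue of a (Hermitian) real matrix. -/
noncomputable def eigMin {n : ℕ} (M : Matrix (Fin n) (Fin n) ℝ) : ℝ :=
  if h : M.IsHermitian then ⨅ i, h.eigenvalues i else 0

/-- Spectral norm (largest singular value) of a real matrix. -/
noncomputable def specNorm {m n : ℕ} (A : Matrix (Fin m) (Fin n) ℝ) : ℝ :=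
  Real.sqrt (eigMax (Aᵀ * A))

/-- Real power of a symmetric matrix, via the spectral decomposition:
`M ^ r` has the same eigenvectors as `M` and eigenvalues `λᵢ ^ r`. -/
noncomputable def mpow {n : ℕ} (M : Matrix (Fin n) (Fin n) ℝ) (r : ℝ) :
    Matrix (Fin n) (Fin n) ℝ :=
  if h : M.IsHermitian then
    (h.eigenvectorUnitary : Matrix (Fin n) (Fin n) ℝ) *
      Matrix.diagonal (fun i => h.eigenvalues i ^ r) *
      (star h.eigenvectorUnitary : Matrix (Fin n) (Fin n) ℝ)
  else 0

/-- Frobenius norm of a real matrix. -/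
noncomputable def frobNorm {m n : ℕ} (M : Matrix (Fin m) (Fin n) ℝ) : ℝ :=
  Real.sqrt ((Mᵀ * M).trace)

open Set

lemma convexOn_neg_mul_log_sub_mul_sq {A B α : ℝ} (hB : 0 ≤ B) (hAB : 2 * B * α ^ 2 ≤ A) :
    ConvexOn ℝ (Ioc 0 α) (fun x => -A * Real.log x - B * x ^ 2) := by
  have hinterior : interior (Ioc (0 : ℝ) α) = Ioo 0 α := interior_Ioc
  refine convexOn_of_hasDerivWithinAt2_nonneg (convex_Ioc 0 α)
    (f' := fun x => -A * x⁻¹ - B * (2 * x)) (f'' := fun x => -A * -(x ^ 2)⁻¹ - B * 2)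
    ?_ ?_ ?_ ?_
  · exact ((Real.continuousOn_log.mono fun x hx => hx.1.ne').const_smul (-A)).sub
      ((continuous_pow 2).continuousOn.const_smul B)
  · rw [hinterior]
    intro x hx
    exact (((Real.hasDerivAt_log hx.1.ne').const_mul (-A)).sub
      ((hasDerivAt_pow 2 x).const_mul B)).hasDerivWithinAt.congr_deriv (by simp)
  · rw [hinterior]
    intro x hx
    exact (((hasDerivAt_inv hx.1.ne').const_mul (-A)).sub
      ((hasDerivAt_id x).const_mul 2 |>.const_mul B)).hasDerivWithinAt.congr_deriv (by simp)
  · rw [hinterior]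
    intro x ⟨hx0, hxα⟩
    have : 2 * B * x ^ 2 ≤ A := le_trans (by gcongr) hAB
    have : 2 * B ≤ A / x ^ 2 := by rw [le_div_iff₀ (by positivity)]; linarith
    simp only [neg_mul_neg, ← div_eq_mul_inv]
    linarith

lemma convexOn_of_subsingleton {E : Type*} [AddCommMonoid E] [Module ℝ E] [Subsingleton E]
    (s : Set E) (f : E → ℝ) : ConvexOn ℝ s f :=
  ⟨Set.subsingleton_of_subsingleton.convex, fun x _ y _ a b _ _ hab => by
    rw [Subsingleton.elim (a • x + b • y) x, Subsingleton.elim y x, smul_eq_mul, smul_eq_mul,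
      ← add_mul, hab, one_mul]⟩

section

variable {ι : Type*} [Fintype ι]

noncomputable def logSumRpowNegSubSq (p μ : ℝ) (l : ι → ℝ) : ℝ :=
  Real.log (∑ j, l j ^ (-p)) - μ / 2 * ∑ j, l j ^ 2

lemma inv_card_mul_rpow_le_rpow_neg_div_sum {l : ι → ℝ} {κ p : ℝ} (hl : ∀ j, 0 < l j)
    (hκ : ∀ i j, l i ≤ κ * l j) (hp : 0 ≤ p) (i : ι) :
    (Fintype.card ι * κ ^ p)⁻¹ ≤ l i ^ (-p) / ∑ j, l j ^ (-p) := by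
  have hκ0 : 0 < κ := pos_of_mul_pos_left ((hl i).trans_le (hκ i i)) (hl i).le
  have hbound (j : ι) : l j ^ (-p) ≤ κ ^ p * l i ^ (-p) := by
    have := Real.rpow_le_rpow_of_nonpos (hl i) (hκ i j) (neg_nonpos.2 hp)
    rwa [Real.mul_rpow hκ0.le (hl j).le, Real.rpow_neg hκ0.le, inv_mul_le_iff₀ (by positivity)]
      at this
  have hsum : ∑ j, l j ^ (-p) ≤ Fintype.card ι * κ ^ p * l i ^ (-p) := by
    simpa [mul_assoc] using Finset.sum_le_sum fun j (_ : j ∈ Finset.univ) => hbound j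
  have hli : 0 < l i ^ (-p) := Real.rpow_pos_of_pos (hl i) _
  calc (Fintype.card ι * κ ^ p)⁻¹ = l i ^ (-p) / (Fintype.card ι * κ ^ p * l i ^ (-p)) := by
        field_simp
    _ ≤ l i ^ (-p) / ∑ j, l j ^ (-p) :=
        div_le_div_of_nonneg_left hli.le
          (Finset.sum_pos (fun j _ => Real.rpow_pos_of_pos (hl j) _) ⟨i, Finset.mem_univ i⟩) hsum

variable [DecidableEq ι]

lemma Convex.sum_mul_mem {s : Set ℝ} (hs : Convex ℝ s) {C : Matrix ι ι ℝ}
    (hC : C ∈ rowStochastic ℝ ι) {x : ι → ℝ} (hx : ∀ j, x j ∈ s) (i : ι) :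
    ∑ j, C i j * x j ∈ s :=
  hs.sum_mem (fun _ _ => nonneg_of_mem_rowStochastic hC) (sum_row_of_mem_rowStochastic hC i)
    fun j _ => hx j

lemma ConvexOn.map_mixture_le {s : Set ℝ} {f : ℝ → ℝ} (hf : ConvexOn ℝ s f)
    {C D : Matrix ι ι ℝ} (hC : C ∈ rowStochastic ℝ ι) (hD : D ∈ rowStochastic ℝ ι)
    {x y : ι → ℝ} (hx : ∀ j, x j ∈ s) (hy : ∀ j, y j ∈ s) {a b : ℝ} (ha : 0 ≤ a) (hb : 0 ≤ b)
    (hab : a + b = 1) (i : ι) :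
    f (a * ∑ j, C i j * x j + b * ∑ j, D i j * y j) ≤
      a * ∑ j, C i j * f (x j) + b * ∑ j, D i j * f (y j) := by
  have jensen {E : Matrix ι ι ℝ} (hE : E ∈ rowStochastic ℝ ι) {z : ι → ℝ} (hz : ∀ j, z j ∈ s) :
      f (∑ j, E i j * z j) ≤ ∑ j, E i j * f (z j) :=
    hf.map_sum_le (fun _ _ => nonneg_of_mem_rowStochastic hE)
      (sum_row_of_mem_rowStochastic hE i) fun j _ => hz j
  calc f (a * ∑ j, C i j * x j + b * ∑ j, D i j * y j)
      ≤ a * f (∑ j, C i j * x j) + b * f (∑ j, D i j * y j) :=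
        hf.2 (hf.1.sum_mul_mem hC hx i) (hf.1.sum_mul_mem hD hy i) ha hb hab
    _ ≤ a * ∑ j, C i j * f (x j) + b * ∑ j, D i j * f (y j) := by
        gcongr
        exacts [jensen hC hx, jensen hD hy]

lemma sum_mul_sub_log_le_log_sum_exp {r : ι → ℝ} (hr : ∀ i, 0 < r i) (hr1 : ∑ i, r i = 1)
    {C : Matrix ι ι ℝ} (hC : C ∈ doublyStochastic ℝ ι) (h : ι → ℝ) :
    ∑ i, r i * (∑ j, C i j * h j - Real.log (r i)) ≤ Real.log (∑ j, Real.exp (h j)) := by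
  obtain ⟨hC0, hrow, hcol⟩ := mem_doublyStochastic_iff_sum.1 hC
  have : Nonempty ι := by
    by_contra hι
    simp [not_nonempty_iff.1 hι] at hr1
  set S := ∑ j, Real.exp (h j)
  have hS : 0 < S := Finset.sum_pos (fun j _ => Real.exp_pos _) Finset.univ_nonempty
  have key (i j : ι) :
      r i * (h j - Real.log (r i)) ≤ r i * (Real.log S - 1) + Real.exp (h j) / S := by
    have := Real.add_one_le_exp (h j - Real.log (r i) - Real.log S)
    rw [Real.exp_sub, Real.exp_sub, Real.exp_log (hr i), Real.exp_log hS, div_div] at this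
    have := mul_le_mul_of_nonneg_left this (hr i).le
    rw [mul_div_assoc', mul_div_mul_left _ _ (hr i).ne'] at this
    linarith
  calc ∑ i, r i * (∑ j, C i j * h j - Real.log (r i))
      = ∑ i, ∑ j, C i j * (r i * (h j - Real.log (r i))) := by
        refine Finset.sum_congr rfl fun i _ => ?_
        simp only [mul_sub, Finset.mul_sum, Finset.sum_sub_distrib, ← Finset.sum_mul, hrow]
        ring_nf
    _ ≤ ∑ i, ∑ j, C i j * (r i * (Real.log S - 1) + Real.exp (h j) / S) := by
        gcongr with i _ j _
        exacts [hC0 i j, key i j]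
    _ = Real.log S := by
        simp only [mul_add, Finset.sum_add_distrib]
        rw [Finset.sum_comm (f := fun i j => C i j * (Real.exp (h j) / S))]
        simp only [← Finset.sum_mul, hrow, hcol, one_mul, ← Finset.sum_div, hr1]
        rw [div_self hS.ne']
        ring

lemma sum_sum_mul_sub_le_logSumRpowNegSubSq {r l : ι → ℝ} (hr : ∀ i, 0 < r i)
    (hr1 : ∑ i, r i = 1) {C : Matrix ι ι ℝ} (hC : C ∈ doublyStochastic ℝ ι)
    (hl : ∀ j, 0 < l j) (p μ : ℝ) :
    ∑ i, (∑ j, C i j * (-(p * r i) * Real.log (l j) - μ / 2 * l j ^ 2) - r i * Real.log (r i))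
      ≤ logSumRpowNegSubSq p μ l := by
  have hexp (j : ι) : l j ^ (-p) = Real.exp (-p * Real.log (l j)) := by
    rw [Real.rpow_def_of_pos (hl j), mul_comm]
  have hgibbs := sum_mul_sub_log_le_log_sum_exp hr hr1 hC fun j => -p * Real.log (l j)
  have hsq : ∑ i, ∑ j, C i j * l j ^ 2 = ∑ j, l j ^ 2 := by
    rw [Finset.sum_comm]
    simp [← Finset.sum_mul, sum_col_of_mem_doublyStochastic hC]
  have hsplit : ∑ i, (∑ j, C i j * (-(p * r i) * Real.log (l j) - μ / 2 * l j ^ 2)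
        - r i * Real.log (r i))
      = ∑ i, r i * (∑ j, C i j * (-p * Real.log (l j)) - Real.log (r i))
        - μ / 2 * ∑ i, ∑ j, C i j * l j ^ 2 := by
    rw [Finset.mul_sum, ← Finset.sum_sub_distrib]
    refine Finset.sum_congr rfl fun i _ => ?_
    have : ∑ j, C i j * (-(p * r i) * Real.log (l j) - μ / 2 * l j ^ 2)
        = r i * ∑ j, C i j * (-p * Real.log (l j)) - μ / 2 * ∑ j, C i j * l j ^ 2 := by
      rw [Finset.mul_sum, Finset.mul_sum, ← Finset.sum_sub_distrib]
      exact Finset.sum_congr rfl fun j _ => by ring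
    rw [this]
    ring
  rw [hsplit, hsq, logSumRpowNegSubSq]
  simp only [hexp]
  linarith

theorem logSumRpowNegSubSq_le_of_mixture [Nonempty ι] {p μ α κ a b : ℝ} (hp : 0 ≤ p)
    (hμ0 : 0 ≤ μ) (hμ : μ * α ^ 2 ≤ p / (Fintype.card ι * κ ^ p)) {lX lY lZ : ι → ℝ}
    (hX : ∀ j, lX j ∈ Ioc 0 α) (hY : ∀ j, lY j ∈ Ioc 0 α) (hZ0 : ∀ j, 0 < lZ j)
    (hZ : ∀ i j, lZ i ≤ κ * lZ j) {CX CY : Matrix ι ι ℝ} (hCX : CX ∈ doublyStochastic ℝ ι)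
    (hCY : CY ∈ doublyStochastic ℝ ι) (ha : 0 ≤ a) (hb : 0 ≤ b) (hab : a + b = 1)
    (hmix : ∀ i, lZ i = a * ∑ j, CX i j * lX j + b * ∑ j, CY i j * lY j) :
    logSumRpowNegSubSq p μ lZ ≤
      a * logSumRpowNegSubSq p μ lX + b * logSumRpowNegSubSq p μ lY := by
  set T := ∑ i, lZ i ^ (-p)
  have hT : 0 < T :=
    Finset.sum_pos (fun i _ => Real.rpow_pos_of_pos (hZ0 i) _) Finset.univ_nonempty
  set r : ι → ℝ := fun i => lZ i ^ (-p) / T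
  have hr0 (i : ι) : 0 < r i := div_pos (Real.rpow_pos_of_pos (hZ0 i) _) hT
  have hr1 : ∑ i, r i = 1 := by rw [← Finset.sum_div, div_self hT.ne']
  have hlogr (i : ι) : Real.log (r i) = -p * Real.log (lZ i) - Real.log T := by
    rw [Real.log_div (Real.rpow_pos_of_pos (hZ0 i) _).ne' hT.ne', Real.log_rpow (hZ0 i)]
  set φ : ι → ℝ → ℝ := fun i x => -(p * r i) * Real.log x - μ / 2 * x ^ 2
  have hφ (i : ι) : ConvexOn ℝ (Ioc 0 α) (φ i) := by
    refine convexOn_neg_mul_log_sub_mul_sq (by positivity) ?_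
    have := mul_le_mul_of_nonneg_left (inv_card_mul_rpow_le_rpow_neg_div_sum hZ0 hZ hp i) hp
    rw [← div_eq_mul_inv] at this
    linarith
  have hrowX := (mem_doublyStochastic_iff_mem_rowStochastic_and_mem_colStochastic.1 hCX).1
  have hrowY := (mem_doublyStochastic_iff_mem_rowStochastic_and_mem_colStochastic.1 hCY).1
  have hjensen (i : ι) :
      φ i (lZ i) ≤ a * ∑ j, CX i j * φ i (lX j) + b * ∑ j, CY i j * φ i (lY j) := by
    rw [hmix i]
    exact (hφ i).map_mixture_le hrowX hrowY hX hY ha hb hab i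
  have hgibbsX := sum_sum_mul_sub_le_logSumRpowNegSubSq hr0 hr1 hCX (fun j => (hX j).1) p μ
  have hgibbsY := sum_sum_mul_sub_le_logSumRpowNegSubSq hr0 hr1 hCY (fun j => (hY j).1) p μ
  calc logSumRpowNegSubSq p μ lZ = ∑ i, (φ i (lZ i) - r i * Real.log (r i)) := by
        have (i : ι) :
            φ i (lZ i) - r i * Real.log (r i) = r i * Real.log T - μ / 2 * lZ i ^ 2 := by
          simp only [φ, hlogr]
          ring
        rw [Finset.sum_congr rfl fun i _ => this i, Finset.sum_sub_distrib, ← Finset.sum_mul, hr1,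
          ← Finset.mul_sum, logSumRpowNegSubSq, one_mul]
    _ ≤ ∑ i, (a * ∑ j, CX i j * φ i (lX j) + b * ∑ j, CY i j * φ i (lY j)
          - r i * Real.log (r i)) := by
        gcongr with i
        exact hjensen i
    _ = a * ∑ i, (∑ j, CX i j * φ i (lX j) - r i * Real.log (r i))
          + b * ∑ i, (∑ j, CY i j * φ i (lY j) - r i * Real.log (r i)) := by
        rw [Finset.mul_sum, Finset.mul_sum, ← Finset.sum_add_distrib]
        refine Finset.sum_congr rfl fun i _ => ?_
        linear_combination (r i * Real.log (r i)) * hab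
    _ ≤ a * logSumRpowNegSubSq p μ lX + b * logSumRpowNegSubSq p μ lY := by
        gcongr

lemma map_sq_mem_doublyStochastic (O : unitaryGroup ι ℝ) :
    (O : Matrix ι ι ℝ).map (· ^ 2) ∈ doublyStochastic ℝ ι := by
  refine mem_doublyStochastic_iff_sum.2 ⟨fun i j => sq_nonneg _, fun i => ?_, fun j => ?_⟩
  · simpa [mul_apply, sq] using congr_fun₂ (Unitary.coe_mul_star_self O) i i
  · simpa [mul_apply, sq] using congr_fun₂ (Unitary.coe_star_mul_self O) j j

lemma Matrix.IsHermitian.exists_doublyStochastic_conj_apply_self {A : Matrix ι ι ℝ}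
    (hA : A.IsHermitian) (V : unitaryGroup ι ℝ) :
    ∃ C ∈ doublyStochastic ℝ ι,
      ∀ i, (star (V : Matrix ι ι ℝ) * A * V) i i = ∑ j, C i j * hA.eigenvalues j := by
  set O := star V * hA.eigenvectorUnitary
  refine ⟨(O : Matrix ι ι ℝ).map (· ^ 2), map_sq_mem_doublyStochastic O, fun i => ?_⟩
  have hspec : star (V : Matrix ι ι ℝ) * A * V =
      O * diagonal hA.eigenvalues * star (O : Matrix ι ι ℝ) := by
    conv_lhs => rw [hA.spectral_theorem]
    simp [O, Unitary.conjStarAlgAut_apply, Matrix.mul_assoc]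
  rw [hspec]
  simp [mul_apply, diagonal, sq, mul_comm, mul_left_comm]

lemma Matrix.IsHermitian.star_eigenvectorUnitary_mul_mul_apply_self {A : Matrix ι ι ℝ}
    (hA : A.IsHermitian) (i : ι) :
    (star (hA.eigenvectorUnitary : Matrix ι ι ℝ) * A * hA.eigenvectorUnitary) i i =
      hA.eigenvalues i := by
  have := hA.conjStarAlgAut_star_eigenvectorUnitary
  rw [Unitary.conjStarAlgAut_apply, Unitary.coe_star, star_star] at this
  simp [this]

lemma Matrix.IsHermitian.exists_eigenvalues_smul_add_smul {X Y : Matrix ι ι ℝ}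
    (hX : X.IsHermitian) (hY : Y.IsHermitian) {a b : ℝ} (hZ : (a • X + b • Y).IsHermitian) :
    ∃ CX ∈ doublyStochastic ℝ ι, ∃ CY ∈ doublyStochastic ℝ ι, ∀ i,
      hZ.eigenvalues i =
        a * ∑ j, CX i j * hX.eigenvalues j + b * ∑ j, CY i j * hY.eigenvalues j := by
  obtain ⟨CX, hCX, hX'⟩ := hX.exists_doublyStochastic_conj_apply_self hZ.eigenvectorUnitary
  obtain ⟨CY, hCY, hY'⟩ := hY.exists_doublyStochastic_conj_apply_self hZ.eigenvectorUnitary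
  refine ⟨CX, hCX, CY, hCY, fun i => ?_⟩
  rw [← hZ.star_eigenvectorUnitary_mul_mul_apply_self, ← hX', ← hY']
  simp [Matrix.mul_add, Matrix.add_mul]

lemma Matrix.IsHermitian.trace_cfc {A : Matrix ι ι ℝ} (hA : A.IsHermitian) (f : ℝ → ℝ) :
    (cfc f A).trace = ∑ i, f (hA.eigenvalues i) := by
  rw [hA.cfc_eq, IsHermitian.cfc, Unitary.conjStarAlgAut_apply, trace_mul_cycle,
    Unitary.coe_star_mul_self, Matrix.one_mul, trace_diagonal]
  simp

end

section

variable {n : ℕ} {X : Matrix (Fin n) (Fin n) ℝ}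

def wellConditionedSet (α κ : ℝ) : Set (Matrix (Fin n) (Fin n) ℝ) :=
  {X | X.PosDef ∧ eigMax X ≤ α ∧ eigMax X ≤ κ * eigMin X}

lemma mpow_eq_cfc (hX : X.IsHermitian) (r : ℝ) : mpow X r = cfc (· ^ r : ℝ → ℝ) X := by
  rw [mpow, dif_pos hX, hX.cfc_eq, IsHermitian.cfc, Unitary.conjStarAlgAut_apply]
  simp [Function.comp_def]

lemma transpose_mul_self_eq_cfc (hX : X.IsHermitian) : Xᵀ * X = cfc (· ^ 2 : ℝ → ℝ) X := by
  rw [cfc_pow_id X 2 hX.isSelfAdjoint, sq, ← conjTranspose_eq_transpose_of_trivial, hX.eq]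

lemma log_trace_mpow_neg_sub_eq (hX : X.IsHermitian) (p μ : ℝ) :
    Real.log (mpow X (-p)).trace - μ / 2 * (Xᵀ * X).trace =
      logSumRpowNegSubSq p μ hX.eigenvalues := by
  rw [mpow_eq_cfc hX, transpose_mul_self_eq_cfc hX, hX.trace_cfc, hX.trace_cfc,
    logSumRpowNegSubSq]

lemma eigMax_le_iff [Nonempty (Fin n)] (hX : X.IsHermitian) {m : ℝ} :
    eigMax X ≤ m ↔ ∀ i, hX.eigenvalues i ≤ m := by
  rw [eigMax, dif_pos hX, ciSup_le_iff (Set.finite_range _).bddAbove]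

lemma le_eigMin_iff [Nonempty (Fin n)] (hX : X.IsHermitian) {m : ℝ} :
    m ≤ eigMin X ↔ ∀ i, m ≤ hX.eigenvalues i := by
  rw [eigMin, dif_pos hX, le_ciInf_iff (Set.finite_range _).bddBelow]

lemma eigenvalues_mem_Icc_eigMin_eigMax [Nonempty (Fin n)] (hX : X.IsHermitian) (i : Fin n) :
    hX.eigenvalues i ∈ Icc (eigMin X) (eigMax X) :=
  ⟨(le_eigMin_iff hX).1 le_rfl i, (eigMax_le_iff hX).1 le_rfl i⟩

lemma eigMin_le_eigMax [Nonempty (Fin n)] (hX : X.IsHermitian) : eigMin X ≤ eigMax X :=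
  (eigenvalues_mem_Icc_eigMin_eigMax hX (Classical.arbitrary _)).1.trans
    (eigenvalues_mem_Icc_eigMin_eigMax hX _).2

lemma eigMin_pos [Nonempty (Fin n)] (hX : X.PosDef) : 0 < eigMin X := by
  obtain ⟨i, hi⟩ := exists_eq_ciInf_of_finite (f := hX.1.eigenvalues)
  rw [eigMin, dif_pos hX.1, ← hi]
  exact hX.eigenvalues_pos i

variable [Nonempty (Fin n)] {α κ : ℝ}

lemma eigenvalues_mem_Ioc_of_mem_wellConditionedSet (hX : X ∈ wellConditionedSet α κ)
    (i : Fin n) : hX.1.1.eigenvalues i ∈ Ioc 0 α :=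
  ⟨hX.1.eigenvalues_pos i, ((eigMax_le_iff hX.1.1).1 hX.2.1) i⟩

lemma pos_of_mem_wellConditionedSet (hX : X ∈ wellConditionedSet α κ) : 0 < κ :=
  pos_of_mul_pos_left ((eigMin_pos hX.1).trans_le ((eigMin_le_eigMax hX.1.1).trans hX.2.2))
    (eigMin_pos hX.1).le

lemma eigenvalues_le_mul_of_mem_wellConditionedSet (hX : X ∈ wellConditionedSet α κ)
    (i j : Fin n) : hX.1.1.eigenvalues i ≤ κ * hX.1.1.eigenvalues j :=
  calc hX.1.1.eigenvalues i ≤ eigMax X := (eigenvalues_mem_Icc_eigMin_eigMax hX.1.1 i).2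
    _ ≤ κ * eigMin X := hX.2.2
    _ ≤ κ * hX.1.1.eigenvalues j := by
      gcongr
      exacts [(pos_of_mem_wellConditionedSet hX).le,
        (eigenvalues_mem_Icc_eigMin_eigMax hX.1.1 j).1]

lemma convex_wellConditionedSet (α κ : ℝ) :
    Convex ℝ (wellConditionedSet (n := n) α κ) := by
  intro X hX Y hY a b ha hb hab
  have hZ : (a • X + b • Y).IsHermitian := (hX.1.1.smul (.all a)).add (hY.1.1.smul (.all b))
  obtain ⟨CX, hCX, CY, hCY, hmix⟩ := hX.1.1.exists_eigenvalues_smul_add_smul hY.1.1 hZ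
  have hbounds (i : Fin n) : a * eigMin X + b * eigMin Y ≤ hZ.eigenvalues i ∧
      hZ.eigenvalues i ≤ a * eigMax X + b * eigMax Y := by
    have hx := (convex_Icc _ _).sum_mul_mem
      (mem_doublyStochastic_iff_mem_rowStochastic_and_mem_colStochastic.1 hCX).1
      (eigenvalues_mem_Icc_eigMin_eigMax hX.1.1) i
    have hy := (convex_Icc _ _).sum_mul_mem
      (mem_doublyStochastic_iff_mem_rowStochastic_and_mem_colStochastic.1 hCY).1
      (eigenvalues_mem_Icc_eigMin_eigMax hY.1.1) i
    rw [hmix i]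
    constructor <;> gcongr
    exacts [hx.1, hy.1, hx.2, hy.2]
  have hmin : 0 < a * eigMin X + b * eigMin Y :=
    convex_Ioi (0 : ℝ) (eigMin_pos hX.1) (eigMin_pos hY.1) ha hb hab
  have hZmin : a * eigMin X + b * eigMin Y ≤ eigMin (a • X + b • Y) :=
    (le_eigMin_iff hZ).2 fun i => (hbounds i).1
  have hZmax : eigMax (a • X + b • Y) ≤ a * eigMax X + b * eigMax Y :=
    (eigMax_le_iff hZ).2 fun i => (hbounds i).2
  refine ⟨hZ.posDef_iff_eigenvalues_pos.2 fun i => hmin.trans_le (hbounds i).1,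
    hZmax.trans (convex_Iic α hX.2.1 hY.2.1 ha hb hab), hZmax.trans ?_⟩
  have hκ := pos_of_mem_wellConditionedSet hX
  calc a * eigMax X + b * eigMax Y ≤ a * (κ * eigMin X) + b * (κ * eigMin Y) := by
        gcongr
        exacts [hX.2.2, hY.2.2]
    _ = κ * (a * eigMin X + b * eigMin Y) := by ring
    _ ≤ κ * eigMin (a • X + b • Y) := by gcongr

end

/-- `k(X) = log(Tr(X^{−p}))` is `μ`-strongly convex w.r.t. the Frobenius
norm on `𝒟 = {X ≻ 0 : λ_max(X) ≤ α, λ_max(X) ≤ κ·λ_min(X)}` with `μ = p/(n κ^p α²)`: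
the function `X ↦ log(Tr(X^{−p})) − (μ/2)·‖X‖_F²` (where `‖X‖_F² = Tr(Xᵀ X)`) is convex
on `𝒟`. -/
theorem log_trace_power_strongly_convex (n : ℕ) (p α κ : ℝ)
    (hp : 0 < p) (hα : 0 < α) (hκ : 1 ≤ κ) :
    ConvexOn ℝ
      {X : Matrix (Fin n) (Fin n) ℝ | X.PosDef ∧ eigMax X ≤ α ∧ eigMax X ≤ κ * eigMin X}
      (fun X => Real.log (mpow X (-p)).trace -
        p / ((n : ℝ) * κ ^ p * α ^ 2) / 2 * (Xᵀ * X).trace) := by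
  rcases isEmpty_or_nonempty (Fin n) with _ | _
  · exact convexOn_of_subsingleton _ _
  have hμ : p / (n * κ ^ p * α ^ 2) * α ^ 2 = p / (Fintype.card (Fin n) * κ ^ p) := by
    rw [Fintype.card_fin]
    field_simp
  refine ⟨convex_wellConditionedSet α κ, fun X hX Y hY a b ha hb hab => ?_⟩
  have hZ := convex_wellConditionedSet α κ hX hY ha hb hab
  obtain ⟨CX, hCX, CY, hCY, hmix⟩ := hX.1.1.exists_eigenvalues_smul_add_smul hY.1.1 hZ.1.1
  simp only [smul_eq_mul, log_trace_mpow_neg_sub_eq hX.1.1, log_trace_mpow_neg_sub_eq hY.1.1,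
    log_trace_mpow_neg_sub_eq hZ.1.1]
  exact logSumRpowNegSubSq_le_of_mixture hp.le (by positivity) hμ.le
    (eigenvalues_mem_Ioc_of_mem_wellConditionedSet hX)
    (eigenvalues_mem_Ioc_of_mem_wellConditionedSet hY) hZ.1.eigenvalues_pos
    (eigenvalues_le_mul_of_mem_wellConditionedSet hZ) hCX hCY ha hb hab hmix
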